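/- arXiv:1306.0708 — 8 statements merged into one kernel-verified Lean document; each statement's English description precedes it below -/
import Mathlib

section
/- Let A and B be 2×2 matrices over a field F such that xA + yB ≠ 0 for all (x,y) ≠ (0,0). If the 2×2×2 tensor (A;B) has tensor rank two, then there exists an invertible 2×2 matrix P such that, writing (X₁;X₂) for the slice-mixture of (A;B) by P⁻¹ (i.e., X₁ = p'₁₁A + p'₁₂B, X₂ = p'₂₁A + p'₂₂B where P⁻¹ = (p'ᵢⱼ)), both det(X₁) = 0 and det(X₂) = 0. -/
open Matrix BigOperators

/-- Cayley hyperdeterminant (up to sign) of a 2×2×2 tensor given by matrix slices A, B. -/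
noncomputable def Delta {F : Type*} [Field F] (A B : Matrix (Fin 2) (Fin 2) F) : F :=
  ((A + B).det - (A - B).det) ^ 2 / 4 - 4 * A.det * B.det

/-- Rank of a 2×2×2 tensor, given as a pair of 2×2 matrix slices. -/
noncomputable def trank3 {F : Type*} [Field F] (T : Fin 2 → Matrix (Fin 2) (Fin 2) F) : ℕ :=
  sInf {r | ∃ u v w : Fin r → Fin 2 → F, ∀ k i j, T k i j = ∑ s, u s k * v s i * w s j}

/-- Rank of a 2×2×2×2 tensor, given as a 2×2 array of 2×2 matrix slices. -/
noncomputable def trank4 {F : Type*} [Field F] (T : Fin 2 → Fin 2 → Matrix (Fin 2) (Fin 2) F) : ℕ :=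
  sInf {r | ∃ u v w z : Fin r → Fin 2 → F,
    ∀ k l i j, T k l i j = ∑ s, u s k * v s l * w s i * z s j}

/-- The 2×2 matrix with columns u and v. -/
def col2 {F : Type*} [Field F] (u v : Fin 2 → F) : Matrix (Fin 2) (Fin 2) F :=
  Matrix.of fun i j => ![u, v] j i

theorem stmt0 {F : Type*} [Field F] (A B : Matrix (Fin 2) (Fin 2) F)
    (hpencil : ∀ x y : F, (x ≠ 0 ∨ y ≠ 0) → x • A + y • B ≠ 0)
    (hrank : trank3 ![A, B] = 2) :
    ∃ P : Matrix (Fin 2) (Fin 2) F, IsUnit P.det ∧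
      ((P⁻¹ 0 0) • A + (P⁻¹ 0 1) • B).det = 0 ∧
      ((P⁻¹ 1 0) • A + (P⁻¹ 1 1) • B).det = 0 := by
  -- extract a rank-2 decomposition
  set S := {r | ∃ u v w : Fin r → Fin 2 → F,
      ∀ k i j, (![A, B] : Fin 2 → Matrix (Fin 2) (Fin 2) F) k i j
        = ∑ s, u s k * v s i * w s j} with hS
  have hne : S.Nonempty := by
    by_contra h
    rw [Set.not_nonempty_iff_eq_empty] at h
    rw [trank3, ← hS, h, Nat.sInf_empty] at hrank
    exact absurd hrank (by norm_num)
  have hmem := Nat.sInf_mem hne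
  rw [show sInf S = trank3 ![A, B] from rfl, hrank] at hmem
  obtain ⟨u, v, w, hT⟩ := hmem
  have hA : ∀ i j, A i j = u 0 0 * v 0 i * w 0 j + u 1 0 * v 1 i * w 1 j := by
    intro i j
    have := hT 0 i j
    simpa [Fin.sum_univ_two] using this
  have hB : ∀ i j, B i j = u 0 1 * v 0 i * w 0 j + u 1 1 * v 1 i * w 1 j := by
    intro i j
    have := hT 1 i j
    simpa [Fin.sum_univ_two] using this
  set U : Matrix (Fin 2) (Fin 2) F := Matrix.of u with hU
  -- U is invertible due to the pencil condition
  have hdet : U.det ≠ 0 := by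
    intro h0
    obtain ⟨c, hc, hc0⟩ := (Matrix.exists_mulVec_eq_zero_iff).2 h0
    have hcne : c 0 ≠ 0 ∨ c 1 ≠ 0 := by
      by_contra hcc
      push_neg at hcc
      apply hc
      funext k
      fin_cases k <;> simp [hcc.1, hcc.2]
    apply hpencil (c 0) (c 1) hcne
    ext i j
    have h0' : u 0 0 * c 0 + u 0 1 * c 1 = 0 := by
      have := congrFun hc0 0
      simpa [Matrix.mulVec, dotProduct, Fin.sum_univ_two, hU] using this
    have h1' : u 1 0 * c 0 + u 1 1 * c 1 = 0 := by
      have := congrFun hc0 1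
      simpa [Matrix.mulVec, dotProduct, Fin.sum_univ_two, hU] using this
    simp only [Matrix.add_apply, Matrix.smul_apply, smul_eq_mul, Matrix.zero_apply,
      hA, hB]
    linear_combination (v 0 i * w 0 j) * h0' + (v 1 i * w 1 j) * h1'
  have hunit : IsUnit U.det := isUnit_iff_ne_zero.mpr hdet
  have hUU : U * U⁻¹ = 1 := Matrix.mul_nonsing_inv U hunit
  -- the four orthogonality equations
  have e00 : u 0 0 * U⁻¹ 0 0 + u 0 1 * U⁻¹ 1 0 = 1 := by
    have := congrFun (congrFun hUU 0) 0
    simpa [Matrix.mul_apply, Fin.sum_univ_two, Matrix.one_apply, hU] using this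
  have e10 : u 1 0 * U⁻¹ 0 0 + u 1 1 * U⁻¹ 1 0 = 0 := by
    have := congrFun (congrFun hUU 1) 0
    simpa [Matrix.mul_apply, Fin.sum_univ_two, Matrix.one_apply, hU] using this
  have e01 : u 0 0 * U⁻¹ 0 1 + u 0 1 * U⁻¹ 1 1 = 0 := by
    have := congrFun (congrFun hUU 0) 1
    simpa [Matrix.mul_apply, Fin.sum_univ_two, Matrix.one_apply, hU] using this
  have e11 : u 1 0 * U⁻¹ 0 1 + u 1 1 * U⁻¹ 1 1 = 1 := by
    have := congrFun (congrFun hUU 1) 1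
    simpa [Matrix.mul_apply, Fin.sum_univ_two, Matrix.one_apply, hU] using this
  refine ⟨Uᵀ, by simpa [Matrix.det_transpose] using hunit, ?_, ?_⟩
  · have hPinv : (Uᵀ)⁻¹ = (U⁻¹)ᵀ := (Matrix.transpose_nonsing_inv U).symm
    have hent : ∀ i j, (((Uᵀ)⁻¹ 0 0) • A + ((Uᵀ)⁻¹ 0 1) • B) i j = v 0 i * w 0 j := by
      intro i j
      simp only [hPinv, Matrix.transpose_apply, Matrix.add_apply, Matrix.smul_apply,
        smul_eq_mul, hA, hB]
      linear_combination (v 0 i * w 0 j) * e00 + (v 1 i * w 1 j) * e10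
    rw [Matrix.det_fin_two, hent 0 0, hent 0 1, hent 1 0, hent 1 1]
    ring
  · have hPinv : (Uᵀ)⁻¹ = (U⁻¹)ᵀ := (Matrix.transpose_nonsing_inv U).symm
    have hent : ∀ i j, (((Uᵀ)⁻¹ 1 0) • A + ((Uᵀ)⁻¹ 1 1) • B) i j = v 1 i * w 1 j := by
      intro i j
      simp only [hPinv, Matrix.transpose_apply, Matrix.add_apply, Matrix.smul_apply,
        smul_eq_mul, hA, hB]
      linear_combination (v 0 i * w 0 j) * e01 + (v 1 i * w 1 j) * e11
    rw [Matrix.det_fin_two, hent 0 0, hent 0 1, hent 1 0, hent 1 1]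
    ring
end

section
/- For 2×2 matrices A, B and any 2×2 matrices P, Q, R with R = (rᵢⱼ), setting (A';B') = (r₁₁PAQᵀ + r₁₂PBQᵀ; r₂₁PAQᵀ + r₂₂PBQᵀ), one has Δ(A';B') = Δ(A;B)·det(P)²·det(Q)²·det(R)². -/
open Matrix BigOperators

private def bform {F : Type*} [Field F] (M N : Matrix (Fin 2) (Fin 2) F) : F :=
  M 0 0 * N 1 1 + M 1 1 * N 0 0 - M 0 1 * N 1 0 - M 1 0 * N 0 1

private lemma Delta_eq {F : Type*} [Field F] (h2 : (2 : F) ≠ 0)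
    (M N : Matrix (Fin 2) (Fin 2) F) :
    Delta M N = bform M N ^ 2 - 4 * M.det * N.det := by
  have h4 : (4 : F) ≠ 0 := by
    intro h; apply h2; have : (2:F)*2 = 0 := by rw [← h]; norm_num
    rcases mul_eq_zero.1 this with h|h <;> exact h
  simp only [Delta, bform, Matrix.det_fin_two, Matrix.add_apply, Matrix.sub_apply]
  field_simp
  ring

private lemma bform_conj {F : Type*} [Field F] (P Q A B : Matrix (Fin 2) (Fin 2) F) :
    bform (P * A * Qᵀ) (P * B * Qᵀ) = bform A B * P.det * Q.det := by
  simp only [bform, Matrix.det_fin_two, Matrix.mul_apply, Fin.sum_univ_two, Matrix.transpose_apply, add_zero]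
  ring

private lemma bform_comb {F : Type*} [Field F] (a b c d : F)
    (X Y : Matrix (Fin 2) (Fin 2) F) :
    bform (a • X + b • Y) (c • X + d • Y)
      = a * c * (2 * X.det) + (a * d + b * c) * bform X Y + b * d * (2 * Y.det) := by
  simp only [bform, Matrix.det_fin_two, Matrix.add_apply, Matrix.smul_apply, smul_eq_mul]
  ring

private lemma det_comb {F : Type*} [Field F] (a b : F) (X Y : Matrix (Fin 2) (Fin 2) F) :
    (a • X + b • Y).det = a ^ 2 * X.det + a * b * bform X Y + b ^ 2 * Y.det := by
  simp only [bform, Matrix.det_fin_two, Matrix.add_apply, Matrix.smul_apply, smul_eq_mul]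
  ring

theorem stmt2 {F : Type*} [Field F] (h2 : (2 : F) ≠ 0)
    (A B P Q R : Matrix (Fin 2) (Fin 2) F) :
    Delta (R 0 0 • (P * A * Qᵀ) + R 0 1 • (P * B * Qᵀ))
          (R 1 0 • (P * A * Qᵀ) + R 1 1 • (P * B * Qᵀ))
      = Delta A B * P.det ^ 2 * Q.det ^ 2 * R.det ^ 2 := by
  set X := P * A * Qᵀ
  set Y := P * B * Qᵀ
  have hX : X.det = A.det * P.det * Q.det := by
    rw [show X = P * A * Qᵀ from rfl, Matrix.det_mul, Matrix.det_mul, Matrix.det_transpose]; ring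
  have hY : Y.det = B.det * P.det * Q.det := by
    rw [show Y = P * B * Qᵀ from rfl, Matrix.det_mul, Matrix.det_mul, Matrix.det_transpose]; ring
  rw [Delta_eq h2, bform_comb, det_comb, det_comb, bform_conj, hX, hY,
    Delta_eq h2, Matrix.det_fin_two R]
  ring
end

section
/- Let T = (A;B) be a 2×2×2 real tensor. If Δ(T) > 0 then rank(T) ≤ 2. -/
open Matrix BigOperators

lemma rank_one_decomp (M : Matrix (Fin 2) (Fin 2) ℝ) (h : M.det = 0) :
    ∃ v w : Fin 2 → ℝ, ∀ i j, M i j = v i * w j := by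
  rw [Matrix.det_fin_two] at h
  by_cases h00 : M 0 0 ≠ 0
  · refine ⟨![M 0 0, M 1 0], ![1, M 0 1 / M 0 0], fun i j => ?_⟩
    fin_cases i <;> fin_cases j <;> simp <;> field_simp <;> linarith [h]
  · push_neg at h00
    rw [h00] at h
    simp at h
    rcases h with h | h
    · exact ⟨![0, 1], ![M 1 0, M 1 1], fun i j => by
        fin_cases i <;> fin_cases j <;> simp [h00, h]⟩
    · exact ⟨![M 0 1, M 1 1], ![0, 1], fun i j => by
        fin_cases i <;> fin_cases j <;> simp [h00, h]⟩

lemma pencil (A B : Matrix (Fin 2) (Fin 2) ℝ) (t : ℝ) :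
    (A - t • B).det = A.det - t * (((A+B).det - (A-B).det)/2) + t^2 * B.det := by
  simp [Matrix.det_fin_two, Matrix.sub_apply, Matrix.add_apply, Matrix.smul_apply, smul_eq_mul]
  ring

lemma main_decomp (A B : Matrix (Fin 2) (Fin 2) ℝ) (hb : B.det ≠ 0) (h : 0 < Delta A B) :
    ∃ u v w : Fin 2 → Fin 2 → ℝ, ∀ k i j, (![A, B] : Fin 2 → Matrix (Fin 2) (Fin 2) ℝ) k i j
      = ∑ s, u s k * v s i * w s j := by
  obtain ⟨l1, l2, hne, hd1, hd2⟩ : ∃ l1 l2 : ℝ, l2 - l1 ≠ 0 ∧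
      (A - l1 • B).det = 0 ∧ (A - l2 • B).det = 0 := by
    set a := A.det with ha
    set b := B.det with hbdef
    set m := ((A+B).det - (A-B).det)/2 with hm
    have hDelta : Delta A B = m^2 - 4*a*b := by rw [Delta, hm]; ring
    have hr2 : Real.sqrt (Delta A B)^2 = m^2 - 4*a*b := by rw [Real.sq_sqrt h.le, hDelta]
    have hrpos : 0 < Real.sqrt (Delta A B) := Real.sqrt_pos.mpr h
    set r := Real.sqrt (Delta A B) with hrdef
    refine ⟨(m + r)/(2*b), (m - r)/(2*b), ?_, ?_, ?_⟩
    · intro hc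
      apply hrpos.ne'
      field_simp at hc
      linarith
    · rw [pencil, ← ha, ← hbdef, ← hm]
      field_simp
      nlinarith [hr2]
    · rw [pencil, ← ha, ← hbdef, ← hm]
      field_simp
      nlinarith [hr2]
  obtain ⟨v1, w1, h1⟩ := rank_one_decomp _ hd1
  obtain ⟨v2, w2, h2⟩ := rank_one_decomp _ hd2
  have h1' : ∀ i j, A i j - l1 * B i j = v1 i * w1 j := by
    intro i j; rw [← h1 i j]; simp
  have h2' : ∀ i j, A i j - l2 * B i j = v2 i * w2 j := by
    intro i j; rw [← h2 i j]; simp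
  refine ⟨![![l2/(l2-l1), 1/(l2-l1)], ![-l1/(l2-l1), -(1/(l2-l1))]], ![v1, v2], ![w1, w2],
    fun k i j => ?_⟩
  fin_cases k
  · simp [Fin.sum_univ_two]
    field_simp
    linear_combination l2 * h1' i j - l1 * h2' i j
  · simp [Fin.sum_univ_two]
    field_simp
    linear_combination h1' i j - h2' i j

lemma transfer (A B X Y : Matrix (Fin 2) (Fin 2) ℝ) (p q r s : ℝ)
    (hA : ∀ i j, A i j = p * X i j + q * Y i j)
    (hB : ∀ i j, B i j = r * X i j + s * Y i j)
    (hd : ∃ u v w : Fin 2 → Fin 2 → ℝ, ∀ k i j,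
      (![X, Y] : Fin 2 → Matrix (Fin 2) (Fin 2) ℝ) k i j = ∑ t, u t k * v t i * w t j) :
    ∃ u v w : Fin 2 → Fin 2 → ℝ, ∀ k i j,
      (![A, B] : Fin 2 → Matrix (Fin 2) (Fin 2) ℝ) k i j = ∑ t, u t k * v t i * w t j := by
  obtain ⟨u, v, w, hu⟩ := hd
  have hX : ∀ i j, X i j = u 0 0 * v 0 i * w 0 j + u 1 0 * v 1 i * w 1 j := fun i j => by
    simpa [Fin.sum_univ_two] using hu 0 i j
  have hY : ∀ i j, Y i j = u 0 1 * v 0 i * w 0 j + u 1 1 * v 1 i * w 1 j := fun i j => by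
    simpa [Fin.sum_univ_two] using hu 1 i j
  refine ⟨fun t => ![p * u t 0 + q * u t 1, r * u t 0 + s * u t 1], v, w, fun k i j => ?_⟩
  fin_cases k
  · simp [Fin.sum_univ_two, hA i j, hX i j, hY i j]; ring
  · simp [Fin.sum_univ_two, hB i j, hX i j, hY i j]; ring

theorem stmt4 (A B : Matrix (Fin 2) (Fin 2) ℝ) (h : 0 < Delta A B) :
    trank3 ![A, B] ≤ 2 := by
  have key : ∃ u v w : Fin 2 → Fin 2 → ℝ, ∀ k i j,
      (![A, B] : Fin 2 → Matrix (Fin 2) (Fin 2) ℝ) k i j = ∑ s, u s k * v s i * w s j := by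
    by_cases hb : B.det ≠ 0
    · exact main_decomp A B hb h
    · push_neg at hb
      by_cases ha : A.det ≠ 0
      · have hsym : Delta B A = Delta A B := by
          simp only [Delta, Matrix.det_fin_two, Matrix.add_apply, Matrix.sub_apply]
          ring
        exact transfer A B B A 0 1 1 0 (fun i j => by ring) (fun i j => by ring)
          (main_decomp B A ha (hsym ▸ h))
      · push_neg at ha
        have hsum : (A+B).det + (A-B).det = 2*(A.det + B.det) := by
          simp only [Matrix.det_fin_two, Matrix.add_apply, Matrix.sub_apply]
          ring
        have hm : (A+B).det ≠ 0 := by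
          intro hc
          rw [Delta, ha, hb] at h
          nlinarith [h, hsum]
        have hD : 0 < Delta (A-B) (A+B) := by
          have : Delta (A-B) (A+B) = 4 * Delta A B := by
            simp only [Delta, Matrix.det_fin_two, Matrix.add_apply, Matrix.sub_apply]
            ring
          rw [this]
          linarith
        exact transfer A B (A-B) (A+B) (1/2) (1/2) (-(1/2)) (1/2)
          (fun i j => by simp [Matrix.sub_apply, Matrix.add_apply]; ring)
          (fun i j => by simp [Matrix.sub_apply, Matrix.add_apply]; ring)
          (main_decomp (A-B) (A+B) hm hD)
  obtain ⟨u, v, w, hu⟩ := key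
  exact Nat.sInf_le ⟨u, v, w, hu⟩
end

section
/- Let T = (A;B) be a 2×2×2 real tensor. If Δ(T) < 0 then rank(T) = 3. -/
open Matrix BigOperators

/-!
If `A` is invertible then `Delta A B = det(A)² · discr(B A⁻¹)`, so `Delta A B < 0` means that
`M = B A⁻¹` has non-real eigenvalues: `M = α + β K` with `K² = -1`, and `K` is conjugate to the
rotation `J = !![0, -1; 1, 0]`. Hence `(A; B)` is obtained from `(1; J)` by linear changes of
coordinates in the three factors, and `(1; J)` is a sum of three rank-one tensors. Conversely, for a
sum of two rank-one tensors `Delta` is the square of the product of the determinants of the three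
factor matrices, so `Delta < 0` rules out decompositions of length at most two.
-/

variable {ι κ μ : Type*} {F : Type*}

def TensorRankLE [CommSemiring F] (T : ι → Matrix κ μ F) (r : ℕ) : Prop :=
  ∃ u : Fin r → ι → F, ∃ v : Fin r → κ → F, ∃ w : Fin r → μ → F,
    ∀ k, T k = ∑ s, u s k • vecMulVec (v s) (w s)

namespace TensorRankLE

variable [CommSemiring F] {T : ι → Matrix κ μ F} {r : ℕ}

theorem succ (h : TensorRankLE T r) : TensorRankLE T (r + 1) := by
  obtain ⟨u, v, w, huvw⟩ := h
  exact ⟨Fin.cons 0 u, Fin.cons 0 v, Fin.cons 0 w, fun k => by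
    simp [Fin.sum_univ_succ, huvw k]⟩

theorem mono {r' : ℕ} (h : TensorRankLE T r) (hr : r ≤ r') : TensorRankLE T r' := by
  induction r', hr using Nat.le_induction with
  | base => exact h
  | succ _ _ ih => exact ih.succ

theorem transform [Fintype ι] [Fintype κ] [Fintype μ] (h : TensorRankLE T r)
    (L : Matrix ι ι F) (P : Matrix κ κ F) (Q : Matrix μ μ F) :
    TensorRankLE (fun k => ∑ l, L k l • (P * T l * Q)) r := by
  obtain ⟨u, v, w, huvw⟩ := h
  refine ⟨fun s => L *ᵥ u s, fun s => P *ᵥ v s, fun s => w s ᵥ* Q, fun k => ?_⟩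
  simp only [huvw, Matrix.mul_sum, Matrix.sum_mul, Matrix.mul_smul, Matrix.smul_mul,
    mul_vecMulVec, vecMulVec_mul, Finset.smul_sum, smul_smul, mulVec, dotProduct,
    Finset.sum_smul]
  exact Finset.sum_comm

end TensorRankLE

theorem trank3_eq_sInf_tensorRankLE [Field F] (T : Fin 2 → Matrix (Fin 2) (Fin 2) F) :
    trank3 T = sInf {r | TensorRankLE T r} := by
  simp only [trank3, TensorRankLE, ← Matrix.ext_iff, Matrix.sum_apply, Matrix.smul_apply,
    vecMulVec_apply, smul_eq_mul, mul_assoc]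

section Delta

variable [Field F]

theorem Delta_mul_right (A B Q : Matrix (Fin 2) (Fin 2) F) :
    Delta (A * Q) (B * Q) = Q.det ^ 2 * Delta A B := by
  simp only [Delta, ← add_mul, ← sub_mul, det_mul]
  ring

variable [NeZero (2 : F)]

theorem Delta_eq_s5 (A B : Matrix (Fin 2) (Fin 2) F) :
    Delta A B = (A 0 0 * B 1 1 + A 1 1 * B 0 0 - A 0 1 * B 1 0 - A 1 0 * B 0 1) ^ 2
      - 4 * A.det * B.det := by
  have hpolar : (A + B).det - (A - B).det =
      2 * (A 0 0 * B 1 1 + A 1 1 * B 0 0 - A 0 1 * B 1 0 - A 1 0 * B 0 1) := by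
    simp only [det_fin_two, Matrix.add_apply, Matrix.sub_apply]
    ring
  rw [Delta, hpolar, mul_pow, show (4 : F) = 2 ^ 2 by norm_num,
    mul_div_cancel_left₀ _ (pow_ne_zero 2 two_ne_zero)]

theorem Delta_one (M : Matrix (Fin 2) (Fin 2) F) : Delta 1 M = M.discr := by
  simp only [Delta_eq_s5, det_one, det_fin_two, discr_fin_two, trace_fin_two, one_apply_eq,
    one_apply_ne, ne_eq, zero_ne_one, one_ne_zero, not_false_eq_true]
  ring

theorem Delta_eq_sq_of_sum_two {A B : Matrix (Fin 2) (Fin 2) F} (u v w : Fin 2 → Fin 2 → F)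
    (huvw : ∀ k, ![A, B] k = ∑ s, u s k • vecMulVec (v s) (w s)) :
    Delta A B = ((of u).det * (of v).det * (of w).det) ^ 2 := by
  have hA := huvw 0
  have hB := huvw 1
  simp only [Matrix.cons_val_zero, Matrix.cons_val_one] at hA hB
  subst hA hB
  simp only [Delta_eq_s5, det_fin_two, Fin.sum_univ_two, Matrix.add_apply, Matrix.smul_apply,
    vecMulVec_apply, smul_eq_mul, of_apply]
  ring

theorem tensorRankLE_one_rotation :
    TensorRankLE ![(1 : Matrix (Fin 2) (Fin 2) F), !![0, -1; 1, 0]] 3 := by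
  refine ⟨![![1 / 2, 1 / 2], ![1 / 2, -1 / 2], ![0, 1]], ![![1, 1], ![1, -1], ![1, 0]],
    ![![1, 1], ![1, -1], ![0, -2]], fun k => ?_⟩
  ext i j
  fin_cases k <;> fin_cases i <;> fin_cases j <;>
    simp [Fin.sum_univ_three] <;> field_simp <;> ring

end Delta

section Ordered

variable [Field F] [LinearOrder F] [IsStrictOrderedRing F]

theorem Delta_nonneg_of_tensorRankLE {A B : Matrix (Fin 2) (Fin 2) F} {r : ℕ}
    (h : TensorRankLE ![A, B] r) (hr : r ≤ 2) : 0 ≤ Delta A B := by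
  obtain ⟨u, v, w, huvw⟩ := h.mono hr
  rw [Delta_eq_sq_of_sum_two u v w huvw]
  positivity

theorem det_ne_zero_of_Delta_neg {A B : Matrix (Fin 2) (Fin 2) F} (h : Delta A B < 0) :
    A.det ≠ 0 := by
  intro hA
  rw [Delta_eq_s5, hA, mul_zero, zero_mul, sub_zero] at h
  exact h.not_ge (sq_nonneg _)

theorem exists_mul_eq_mul_rotation {K : Matrix (Fin 2) (Fin 2) F} (hK : K * K = -1) :
    ∃ P : Matrix (Fin 2) (Fin 2) F, IsUnit P.det ∧ K * P = P * !![0, -1; 1, 0] := by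
  have h00 := congrFun (congrFun hK 0) 0
  have h10 := congrFun (congrFun hK 1) 0
  simp only [mul_apply, Fin.sum_univ_two, Matrix.neg_apply, one_apply_eq, one_apply_ne, ne_eq,
    one_ne_zero, not_false_eq_true, neg_zero] at h00 h10
  -- `P = [e₁ | K e₁]`, so `K P = [K e₁ | -e₁] = P J`.
  refine ⟨!![1, K 0 0; 0, K 1 0], ?_, ?_⟩
  · rw [det_fin_two_of, isUnit_iff_ne_zero]
    intro h
    simp only [one_mul, mul_zero, sub_zero] at h
    rw [h, mul_zero, add_zero] at h00
    nlinarith [mul_self_nonneg (K 0 0)]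
  · ext i j
    fin_cases i <;> fin_cases j <;> simp [mul_apply, Fin.sum_univ_two] <;> linarith

theorem tensorRankLE_three_of_mul_self_eq_neg_one {K : Matrix (Fin 2) (Fin 2) F}
    (hK : K * K = -1) (A : Matrix (Fin 2) (Fin 2) F) (α β : F) :
    TensorRankLE ![A, α • A + β • (K * A)] 3 := by
  obtain ⟨P, hP, hKP⟩ := exists_mul_eq_mul_rotation hK
  have hJ : P * !![0, -1; 1, 0] * (P⁻¹ * A) = K * A := by
    rw [← hKP, Matrix.mul_assoc, Matrix.mul_nonsing_inv_cancel_left _ _ hP]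
  convert tensorRankLE_one_rotation.transform !![1, 0; α, β] P (P⁻¹ * A) using 1
  funext k
  fin_cases k <;> simp [Fin.sum_univ_two, hJ, Matrix.mul_nonsing_inv_cancel_left _ _ hP]

end Ordered

theorem exists_eq_smul_one_add_smul_of_discr_neg {M : Matrix (Fin 2) (Fin 2) ℝ}
    (hM : M.discr < 0) : ∃ (α β : ℝ) (K : Matrix (Fin 2) (Fin 2) ℝ),
      K * K = -1 ∧ M = α • 1 + β • K := by
  set α := M.trace / 2
  set β := √(-M.discr) / 2
  have hβ : β ≠ 0 := (div_pos (Real.sqrt_pos.2 (neg_pos.2 hM)) two_pos).ne'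
  have hsq : (M - α • 1) * (M - α • 1) = -(β ^ 2) • 1 := by
    have hβsq : β ^ 2 = -M.discr / 4 := by
      rw [div_pow, Real.sq_sqrt (by linarith)]
      norm_num
    rw [hβsq, discr_fin_two]
    ext i j
    fin_cases i <;> fin_cases j <;>
      simp [α, mul_apply, Fin.sum_univ_two, trace_fin_two, det_fin_two] <;> ring
  refine ⟨α, β, β⁻¹ • (M - α • 1), ?_, ?_⟩
  · rw [Matrix.smul_mul, Matrix.mul_smul, hsq, smul_smul, smul_smul,
      show β⁻¹ * β⁻¹ * -β ^ 2 = -1 by field_simp, neg_one_smul]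
  · rw [smul_smul, mul_inv_cancel₀ hβ, one_smul, add_sub_cancel]

theorem tensorRankLE_three_of_Delta_neg {A B : Matrix (Fin 2) (Fin 2) ℝ} (h : Delta A B < 0) :
    TensorRankLE ![A, B] 3 := by
  have hA : IsUnit A.det := (det_ne_zero_of_Delta_neg h).isUnit
  set M := B * A⁻¹
  have hMA : M * A = B := Matrix.nonsing_inv_mul_cancel_right _ _ hA
  have hM : M.discr < 0 := by
    have hDelta := Delta_mul_right 1 M A
    rw [Matrix.one_mul, hMA, Delta_one] at hDelta
    rw [hDelta] at h
    exact neg_of_mul_neg_right h (sq_nonneg _)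
  obtain ⟨α, β, K, hK, hMK⟩ := exists_eq_smul_one_add_smul_of_discr_neg hM
  have hB : B = α • A + β • (K * A) := by
    rw [← hMA, hMK, Matrix.add_mul, Matrix.smul_mul, Matrix.smul_mul, Matrix.one_mul]
  rw [hB]
  exact tensorRankLE_three_of_mul_self_eq_neg_one hK A α β

theorem stmt5 (A B : Matrix (Fin 2) (Fin 2) ℝ) (h : Delta A B < 0) :
    trank3 ![A, B] = 3 := by
  have h3 := tensorRankLE_three_of_Delta_neg h
  rw [trank3_eq_sInf_tensorRankLE]
  refine le_antisymm (Nat.sInf_le h3) (le_csInf ⟨3, h3⟩ fun r hr => ?_)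
  by_contra! hr3
  exact h.not_ge (Delta_nonneg_of_tensorRankLE hr (by omega))
end

section
/- Let T = (A;B) be a 2×2×2 real tensor. If rank(T) ≤ 2 then Δ(T) ≥ 0. -/
open Matrix BigOperators

/-!
A decomposition `T = a ⊗ b ⊗ c + a' ⊗ b' ⊗ c'` gives
`Δ(T) = (det[a a'] · det[b b'] · det[c c'])²`, a square. A tensor of rank at most two
always has such a decomposition, after padding a shorter one with zero summands.
-/

namespace Tensor222

variable {F : Type*} [Field F]

def HasDecompOfLength (T : Fin 2 → Matrix (Fin 2) (Fin 2) F) (r : ℕ) : Prop :=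
  ∃ u v w : Fin r → Fin 2 → F, ∀ k i j, T k i j = ∑ s, u s k * v s i * w s j

theorem hasDecompOfLength_four (T : Fin 2 → Matrix (Fin 2) (Fin 2) F) :
    HasDecompOfLength T 4 := by
  refine ⟨![fun k => T k 0 0, fun k => T k 0 1, fun k => T k 1 0, fun k => T k 1 1],
    ![![1, 0], ![1, 0], ![0, 1], ![0, 1]], ![![1, 0], ![0, 1], ![1, 0], ![0, 1]], ?_⟩
  intro k i j
  fin_cases i <;> fin_cases j <;> simp [Fin.sum_univ_four]

theorem HasDecompOfLength.mono {T : Fin 2 → Matrix (Fin 2) (Fin 2) F} {r r' : ℕ}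
    (hT : HasDecompOfLength T r) (hr : r ≤ r') : HasDecompOfLength T r' := by
  obtain ⟨d, rfl⟩ := Nat.exists_eq_add_of_le hr
  obtain ⟨u, v, w, huvw⟩ := hT
  refine ⟨Fin.append u 0, Fin.append v 0, Fin.append w 0, fun k i j => ?_⟩
  simp [huvw, Fin.sum_univ_add]

theorem hasDecompOfLength_trank3 (T : Fin 2 → Matrix (Fin 2) (Fin 2) F) :
    HasDecompOfLength T (trank3 T) :=
  Nat.sInf_mem (s := {r | HasDecompOfLength T r}) ⟨4, hasDecompOfLength_four T⟩

theorem hasDecompOfLength_of_trank3_le {T : Fin 2 → Matrix (Fin 2) (Fin 2) F} {r : ℕ}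
    (h : trank3 T ≤ r) : HasDecompOfLength T r :=
  (hasDecompOfLength_trank3 T).mono h

theorem delta_eq_sq_of_decomp [NeZero (2 : F)] {T : Fin 2 → Matrix (Fin 2) (Fin 2) F}
    {u v w : Fin 2 → Fin 2 → F} (hT : ∀ k i j, T k i j = ∑ s, u s k * v s i * w s j) :
    Delta (T 0) (T 1) = (det (of u) * det (of v) * det (of w)) ^ 2 := by
  have h4 : (4 : F) ≠ 0 := by
    simpa [show (4 : F) = 2 * 2 by norm_num] using NeZero.ne (2 : F)
  simp only [Delta, det_fin_two, Matrix.add_apply, Matrix.sub_apply, hT, Fin.sum_univ_two,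
    of_apply]
  field_simp
  ring

end Tensor222

open Tensor222 in
theorem stmt6 (A B : Matrix (Fin 2) (Fin 2) ℝ) (h : trank3 ![A, B] ≤ 2) :
    0 ≤ Delta A B := by
  obtain ⟨u, v, w, huvw⟩ := hasDecompOfLength_of_trank3_le h
  rw [show Delta A B = Delta (![A, B] 0) (![A, B] 1) from rfl, delta_eq_sq_of_decomp huvw]
  exact sq_nonneg _
end

section
/- Let A = (a₁,a₂) and B = (b₁,b₂) be real 2×2 matrices and T = (A;B) the corresponding 2×2×2 tensor. Then rank_ℝ(T) ≤ 2 if and only if at least one of the following holds: (1) αA + βB = 0 for some (α,β) ≠ (0,0); (2) α(a₁,b₁) + β(a₂,b₂) = 0 for some (α,β) ≠ (0,0); (3) Δ(A;B) = 0 and det(a₁,b₁) + det(a₂,b₂) = 0; (4) Δ(A;B) > 0. -/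
open Matrix BigOperators

/-! If `A = Σₛ uₛ₀ vₛ wₛᵀ` and `B = Σₛ uₛ₁ vₛ wₛᵀ`, then `Δ(A;B) = (det U det V det W)²` and
`det(a₁,b₁) + det(a₂,b₂) = det U det V ⟪w₀, w₁⟫`: a singular `U` gives (1), a singular `W` gives (2),
a singular `V` gives (3), and otherwise (4) holds.

Conversely, `Δ(A;B)` is the discriminant of `t ↦ det (A + t B)`. If `Δ > 0` and `B` is invertible,
its two distinct roots `t₁, t₂` make `A + tᵢ B` of rank one, and `A, B` lie in their span. `Δ(A;B)`
is also the discriminant of the binary form `c ↦ det (A c, B c)`, with matrix `Aᵀ J B`; under (3)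
this matrix is a multiple of `J`, which forces `A` and `B` to be proportional unless both are
singular. Proportional pairs, pairs with a common kernel vector (2) and pairs of singular matrices
are sums of two rank-one tensors directly.
-/
section CPDecomposition

variable {F : Type*} [Field F]

def HasCPDecomp (T : Fin 2 → Matrix (Fin 2) (Fin 2) F) (r : ℕ) : Prop :=
  ∃ u v w : Fin r → Fin 2 → F, ∀ k i j, T k i j = ∑ s, u s k * v s i * w s j

theorem HasCPDecomp.succ {T : Fin 2 → Matrix (Fin 2) (Fin 2) F} {r : ℕ} (h : HasCPDecomp T r) :
    HasCPDecomp T (r + 1) := by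
  obtain ⟨u, v, w, h⟩ := h
  exact ⟨Fin.cons 0 u, Fin.cons 0 v, Fin.cons 0 w, fun k i j => by simp [Fin.sum_univ_succ, h]⟩

theorem HasCPDecomp.mono {T : Fin 2 → Matrix (Fin 2) (Fin 2) F} {r n : ℕ} (h : HasCPDecomp T r)
    (hrn : r ≤ n) : HasCPDecomp T n := by
  induction n, hrn using Nat.le_induction with
  | base => exact h
  | succ n _ ih => exact ih.succ

theorem hasCPDecomp_four (T : Fin 2 → Matrix (Fin 2) (Fin 2) F) : HasCPDecomp T 4 := by
  refine ⟨![![1, 0], ![1, 0], ![0, 1], ![0, 1]],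
    ![fun i => T 0 i 0, fun i => T 0 i 1, fun i => T 1 i 0, fun i => T 1 i 1],
    ![![1, 0], ![0, 1], ![1, 0], ![0, 1]], fun k i j => ?_⟩
  fin_cases k <;> fin_cases j <;> simp [Fin.sum_univ_four]

theorem trank3_le_iff (T : Fin 2 → Matrix (Fin 2) (Fin 2) F) (r : ℕ) :
    trank3 T ≤ r ↔ HasCPDecomp T r :=
  ⟨fun h => (Nat.sInf_mem (s := {r | HasCPDecomp T r}) ⟨4, hasCPDecomp_four T⟩).mono h,
    fun h => Nat.sInf_le h⟩

theorem HasCPDecomp.swap {A B : Matrix (Fin 2) (Fin 2) F} {r : ℕ} (h : HasCPDecomp ![A, B] r) :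
    HasCPDecomp ![B, A] r := by
  obtain ⟨u, v, w, h⟩ := h
  refine ⟨fun s => ![u s 1, u s 0], v, w, fun k i j => ?_⟩
  fin_cases k
  · simpa using h 1 i j
  · simpa using h 0 i j

theorem exists_mulVec_fin_two_eq_zero_iff (M : Matrix (Fin 2) (Fin 2) F) :
    (∃ α β : F, (α ≠ 0 ∨ β ≠ 0) ∧ M *ᵥ ![α, β] = 0) ↔ M.det = 0 := by
  rw [← exists_mulVec_eq_zero_iff]
  constructor
  · rintro ⟨α, β, hαβ, hM⟩
    exact ⟨![α, β], by simpa [or_iff_not_imp_left] using hαβ, hM⟩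
  · rintro ⟨c, hc, hM⟩
    refine ⟨c 0, c 1, ?_, by rwa [← FinVec.etaExpand_eq c] at hM⟩
    contrapose! hc
    ext i
    fin_cases i <;> simp [hc]

theorem exists_eq_vecMulVec_of_det_eq_zero {M : Matrix (Fin 2) (Fin 2) F} (h : M.det = 0) :
    ∃ v w : Fin 2 → F, M = vecMulVec v w := by
  obtain ⟨α, β, hαβ, hM⟩ := (exists_mulVec_fin_two_eq_zero_iff M).2 h
  have hrow : ∀ i, M i 0 * α + M i 1 * β = 0 := fun i => by
    simpa [mulVec, dotProduct, Fin.sum_univ_two] using congrFun hM i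
  rcases hαβ with hα | hβ
  · have hcol (i : Fin 2) : M i 0 = M i 1 * (-β / α) := by
      field_simp
      linear_combination hrow i
    refine ⟨fun i => M i 1, ![-β / α, 1], ?_⟩
    ext i j
    fin_cases j <;> simp [vecMulVec_apply, hcol]
  · have hcol (i : Fin 2) : M i 1 = M i 0 * (-α / β) := by
      field_simp
      linear_combination hrow i
    refine ⟨fun i => M i 0, ![1, -α / β], ?_⟩
    ext i j
    fin_cases j <;> simp [vecMulVec_apply, hcol]

end CPDecomposition

section Builders

variable {F : Type*} [Field F] {A B : Matrix (Fin 2) (Fin 2) F}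

theorem hasCPDecomp_two_of_eq_vecMulVec {v₁ w₁ v₂ w₂ : Fin 2 → F} {p q r s : F}
    (hA : A = p • vecMulVec v₁ w₁ + q • vecMulVec v₂ w₂)
    (hB : B = r • vecMulVec v₁ w₁ + s • vecMulVec v₂ w₂) : HasCPDecomp ![A, B] 2 := by
  refine ⟨![![p, r], ![q, s]], ![v₁, v₂], ![w₁, w₂], fun k i j => ?_⟩
  fin_cases k <;>
    simp only [hA, hB, Matrix.add_apply, Matrix.smul_apply, vecMulVec_apply, smul_eq_mul,
      Fin.sum_univ_two, Fin.isValue, Fin.zero_eta, Fin.mk_one, cons_val', cons_val_zero,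
      cons_val_one, cons_val_fin_one] <;>
    ring

theorem hasCPDecomp_two_of_eq_smul_add_smul {M N : Matrix (Fin 2) (Fin 2) F} {p q r s : F}
    (hM : M.det = 0) (hN : N.det = 0) (hA : A = p • M + q • N) (hB : B = r • M + s • N) :
    HasCPDecomp ![A, B] 2 := by
  obtain ⟨v₁, w₁, rfl⟩ := exists_eq_vecMulVec_of_det_eq_zero hM
  obtain ⟨v₂, w₂, rfl⟩ := exists_eq_vecMulVec_of_det_eq_zero hN
  exact hasCPDecomp_two_of_eq_vecMulVec hA hB

theorem hasCPDecomp_two_of_det_eq_zero (hA : A.det = 0) (hB : B.det = 0) :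
    HasCPDecomp ![A, B] 2 :=
  hasCPDecomp_two_of_eq_smul_add_smul (p := 1) (q := 0) (r := 0) (s := 1) hA hB (by simp)
    (by simp)

theorem hasCPDecomp_two_of_det_ne_zero_cases (hB : B.det ≠ 0 → HasCPDecomp ![A, B] 2)
    (hA : A.det ≠ 0 → HasCPDecomp ![B, A] 2) : HasCPDecomp ![A, B] 2 := by
  by_cases hB0 : B.det = 0
  · by_cases hA0 : A.det = 0
    · exact hasCPDecomp_two_of_det_eq_zero hA0 hB0
    · exact (hA hA0).swap
  · exact hB hB0

theorem hasCPDecomp_two_of_smul_add_smul_eq_zero {α β : F} (hα : α ≠ 0)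
    (h : α • A + β • B = 0) : HasCPDecomp ![A, B] 2 := by
  have hA : A = (-β / α) • B := by
    rw [div_eq_inv_mul, mul_smul, neg_smul, ← eq_neg_of_add_eq_zero_left h, inv_smul_smul₀ hα]
  refine hasCPDecomp_two_of_eq_vecMulVec (v₁ := fun i => B i 0) (w₁ := ![1, 0])
    (v₂ := fun i => B i 1) (w₂ := ![0, 1]) (p := -β / α) (q := -β / α) (r := 1) (s := 1) ?_ ?_
  all_goals ext i j; fin_cases j <;> simp [hA]

theorem hasCPDecomp_two_of_det_add_smul_eq_zero {t₁ t₂ : F} (ht : t₁ ≠ t₂)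
    (h₁ : (A + t₁ • B).det = 0) (h₂ : (A + t₂ • B).det = 0) : HasCPDecomp ![A, B] 2 := by
  have ht' : t₁ - t₂ ≠ 0 := sub_ne_zero.2 ht
  refine hasCPDecomp_two_of_eq_smul_add_smul (p := -t₂ / (t₁ - t₂)) (q := t₁ / (t₁ - t₂))
    (r := 1 / (t₁ - t₂)) (s := -1 / (t₁ - t₂)) h₁ h₂ ?_ ?_
  all_goals
    ext i j
    simp only [Matrix.add_apply, Matrix.smul_apply, smul_eq_mul]
    field_simp
    ring

end Builders

section Hyperdeterminant

variable {F : Type*} [Field F]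

def polarDet (A B : Matrix (Fin 2) (Fin 2) F) : F :=
  A 0 0 * B 1 1 + A 1 1 * B 0 0 - A 0 1 * B 1 0 - A 1 0 * B 0 1

theorem det_add_smul (A B : Matrix (Fin 2) (Fin 2) F) (t : F) :
    (A + t • B).det = B.det * (t * t) + polarDet A B * t + A.det := by
  simp only [det_fin_two, Matrix.add_apply, Matrix.smul_apply, smul_eq_mul, polarDet]
  ring

theorem Delta_eq_discrim [NeZero (2 : F)] (A B : Matrix (Fin 2) (Fin 2) F) :
    Delta A B = discrim B.det (polarDet A B) A.det := by
  have h4 : (4 : F) ≠ 0 := by simpa [show (4 : F) = 2 * 2 by norm_num] using NeZero.ne (2 : F)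
  simp only [Delta, discrim, det_fin_two, Matrix.add_apply, Matrix.sub_apply, polarDet]
  field_simp
  ring

theorem Delta_comm [NeZero (2 : F)] (A B : Matrix (Fin 2) (Fin 2) F) : Delta B A = Delta A B := by
  simp only [Delta_eq_discrim, discrim, polarDet]
  ring

/-- `crossMatrix A B = Aᵀ J B` with `J = !![0, 1; -1, 0]`: its entry `(i, j)` is the determinant of
the `i`-th column of `A` and the `j`-th column of `B`. -/
def crossMatrix (A B : Matrix (Fin 2) (Fin 2) F) : Matrix (Fin 2) (Fin 2) F :=
  of fun i j => A 0 i * B 1 j - A 1 i * B 0 j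

theorem Delta_eq_discrim_crossMatrix [NeZero (2 : F)] (A B : Matrix (Fin 2) (Fin 2) F) :
    Delta A B = discrim (crossMatrix A B 0 0) (crossMatrix A B 0 1 + crossMatrix A B 1 0)
      (crossMatrix A B 1 1) := by
  simp only [Delta_eq_discrim, discrim, polarDet, crossMatrix, det_fin_two, of_apply]
  ring

theorem det_smul_eq_of_crossMatrix {A B : Matrix (Fin 2) (Fin 2) F} (h₀₀ : crossMatrix A B 0 0 = 0)
    (h₁₁ : crossMatrix A B 1 1 = 0) (h : crossMatrix A B 0 1 + crossMatrix A B 1 0 = 0) :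
    B.det • A = crossMatrix A B 0 1 • B ∧ A.det • B = crossMatrix A B 0 1 • A := by
  -- the hypotheses say `Aᵀ J B = λ J` with `λ = crossMatrix A B 0 1`; multiply by `adj B`, using
  -- `Bᵀ J B = det B • J` (and symmetrically for `A`)
  simp only [crossMatrix, of_apply] at h₀₀ h₁₁ h ⊢
  constructor <;> ext i j <;> fin_cases i <;> fin_cases j <;>
    simp only [det_fin_two, Matrix.smul_apply, smul_eq_mul, Fin.isValue, Fin.zero_eta, Fin.mk_one]
  · linear_combination -B 0 1 * h₀₀
  · linear_combination -B 0 1 * h + B 0 0 * h₁₁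
  · linear_combination -B 1 1 * h₀₀
  · linear_combination -B 1 1 * h + B 1 0 * h₁₁
  · linear_combination A 0 1 * h₀₀ - A 0 0 * h
  · linear_combination -A 0 0 * h₁₁
  · linear_combination A 1 1 * h₀₀ - A 1 0 * h
  · linear_combination -A 1 0 * h₁₁

end Hyperdeterminant

section Slices

variable {F : Type*} [Field F] (u v w : Fin 2 → Fin 2 → F)

def cpSlice (k : Fin 2) : Matrix (Fin 2) (Fin 2) F :=
  of fun i j => ∑ s, u s k * v s i * w s j

theorem Delta_cpSlice [NeZero (2 : F)] :
    Delta (cpSlice u v w 0) (cpSlice u v w 1) = ((of u).det * (of v).det * (of w).det) ^ 2 := by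
  simp only [Delta_eq_discrim, discrim, polarDet, cpSlice, det_fin_two, of_apply, Fin.sum_univ_two]
  ring

theorem trace_crossMatrix_cpSlice :
    (crossMatrix (cpSlice u v w 0) (cpSlice u v w 1)).trace =
      (of u).det * (of v).det * (w 0 ⬝ᵥ w 1) := by
  simp only [trace_fin_two, crossMatrix, cpSlice, det_fin_two, of_apply, Fin.sum_univ_two,
    vec2_dotProduct]
  ring

theorem exists_smul_add_smul_cpSlice_eq_zero (hu : (of u).det = 0) :
    ∃ α β : F, (α ≠ 0 ∨ β ≠ 0) ∧ α • cpSlice u v w 0 + β • cpSlice u v w 1 = 0 := by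
  obtain ⟨α, β, hαβ, hker⟩ := (exists_mulVec_fin_two_eq_zero_iff _).2 hu
  have hrow (s : Fin 2) : u s 0 * α + u s 1 * β = 0 := by
    simpa [mulVec, dotProduct, Fin.sum_univ_two] using congrFun hker s
  refine ⟨α, β, hαβ, ?_⟩
  ext i j
  simp only [cpSlice, Matrix.add_apply, Matrix.smul_apply, of_apply, Fin.sum_univ_two,
    smul_eq_mul, Matrix.zero_apply]
  linear_combination (v 0 i * w 0 j) * hrow 0 + (v 1 i * w 1 j) * hrow 1

theorem cpSlice_mulVec_eq_zero {c : Fin 2 → F} (hc : of w *ᵥ c = 0) (k : Fin 2) :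
    cpSlice u v w k *ᵥ c = 0 := by
  have hrow (s : Fin 2) : w s 0 * c 0 + w s 1 * c 1 = 0 := by
    simpa [mulVec, dotProduct, Fin.sum_univ_two] using congrFun hc s
  ext i
  simp only [cpSlice, mulVec, dotProduct, of_apply, Fin.sum_univ_two, Pi.zero_apply]
  linear_combination (u 0 k * v 0 i) * hrow 0 + (u 1 k * v 1 i) * hrow 1

end Slices

section Real

variable {A B : Matrix (Fin 2) (Fin 2) ℝ}

theorem crossMatrix_of_Delta_eq_zero (hΔ : Delta A B = 0) (htr : (crossMatrix A B).trace = 0) :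
    crossMatrix A B 0 0 = 0 ∧ crossMatrix A B 1 1 = 0 ∧
      crossMatrix A B 0 1 + crossMatrix A B 1 0 = 0 := by
  rw [Delta_eq_discrim_crossMatrix, discrim] at hΔ
  rw [trace_fin_two] at htr
  -- for `X = crossMatrix A B` with `X₁₁ = -X₀₀`, the discriminant is `(X₀₁ + X₁₀)² + 4 X₀₀²`
  have h₀₀ : crossMatrix A B 0 0 = 0 := by
    nlinarith [sq_nonneg (crossMatrix A B 0 1 + crossMatrix A B 1 0)]
  refine ⟨h₀₀, by linear_combination htr - h₀₀, ?_⟩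
  nlinarith [sq_nonneg (crossMatrix A B 0 1 + crossMatrix A B 1 0)]

theorem hasCPDecomp_two_of_Delta_pos (hB : B.det ≠ 0) (hΔ : 0 < Delta A B) :
    HasCPDecomp ![A, B] 2 := by
  set s := √(Delta A B)
  have hs : discrim B.det (polarDet A B) A.det = s * s := by
    rw [← Delta_eq_discrim, Real.mul_self_sqrt hΔ.le]
  have hroot (t : ℝ) : (A + t • B).det = 0 ↔
      t = (-polarDet A B + s) / (2 * B.det) ∨ t = (-polarDet A B - s) / (2 * B.det) := by
    rw [det_add_smul]
    exact quadratic_eq_zero_iff hB hs t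
  refine hasCPDecomp_two_of_det_add_smul_eq_zero ?_ ((hroot _).2 (Or.inl rfl))
    ((hroot _).2 (Or.inr rfl))
  have hs0 : s ≠ 0 := (Real.sqrt_pos.2 hΔ).ne'
  intro h
  field_simp at h
  exact hs0 (by linarith)

end Real

theorem hasCPDecomp_two_iff (A B : Matrix (Fin 2) (Fin 2) ℝ) :
    HasCPDecomp ![A, B] 2 ↔
      (∃ α β : ℝ, (α ≠ 0 ∨ β ≠ 0) ∧ α • A + β • B = 0) ∨
      (∃ α β : ℝ, (α ≠ 0 ∨ β ≠ 0) ∧ A *ᵥ ![α, β] = 0 ∧ B *ᵥ ![α, β] = 0) ∨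
      (Delta A B = 0 ∧ (crossMatrix A B).trace = 0) ∨ 0 < Delta A B := by
  constructor
  · rintro ⟨u, v, w, h⟩
    obtain rfl : A = cpSlice u v w 0 := by ext i j; exact h 0 i j
    obtain rfl : B = cpSlice u v w 1 := by ext i j; exact h 1 i j
    by_cases hu : (of u).det = 0
    · exact Or.inl (exists_smul_add_smul_cpSlice_eq_zero u v w hu)
    by_cases hw : (of w).det = 0
    · obtain ⟨α, β, hαβ, hker⟩ := (exists_mulVec_fin_two_eq_zero_iff _).2 hw
      exact Or.inr (Or.inl ⟨α, β, hαβ, cpSlice_mulVec_eq_zero u v w hker 0,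
        cpSlice_mulVec_eq_zero u v w hker 1⟩)
    rw [Delta_cpSlice, trace_crossMatrix_cpSlice]
    by_cases hv : (of v).det = 0
    · exact Or.inr (Or.inr (Or.inl (by simp [hv])))
    · exact Or.inr (Or.inr (Or.inr (sq_pos_of_ne_zero (by simp [hu, hv, hw]))))
  · rintro (⟨α, β, hα | hβ, h⟩ | ⟨α, β, hαβ, hA, hB⟩ | ⟨hΔ, htr⟩ | hΔ)
    · exact hasCPDecomp_two_of_smul_add_smul_eq_zero hα h
    · exact (hasCPDecomp_two_of_smul_add_smul_eq_zero hβ ((add_comm _ _).trans h)).swap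
    · exact hasCPDecomp_two_of_det_eq_zero ((exists_mulVec_fin_two_eq_zero_iff A).1 ⟨α, β, hαβ, hA⟩)
        ((exists_mulVec_fin_two_eq_zero_iff B).1 ⟨α, β, hαβ, hB⟩)
    · obtain ⟨h₀₀, h₁₁, h⟩ := crossMatrix_of_Delta_eq_zero hΔ htr
      obtain ⟨hA, hB⟩ := det_smul_eq_of_crossMatrix h₀₀ h₁₁ h
      have hA' : B.det • A + (-crossMatrix A B 0 1) • B = 0 := by rw [hA, neg_smul, add_neg_cancel]
      have hB' : A.det • B + (-crossMatrix A B 0 1) • A = 0 := by rw [hB, neg_smul, add_neg_cancel]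
      exact hasCPDecomp_two_of_det_ne_zero_cases
        (fun hB0 => hasCPDecomp_two_of_smul_add_smul_eq_zero hB0 hA')
        (fun hA0 => hasCPDecomp_two_of_smul_add_smul_eq_zero hA0 hB')
    · exact hasCPDecomp_two_of_det_ne_zero_cases (fun hB0 => hasCPDecomp_two_of_Delta_pos hB0 hΔ)
        (fun hA0 => hasCPDecomp_two_of_Delta_pos hA0 (by rwa [Delta_comm]))

section Columns

variable {F : Type*} [Field F] (a₁ a₂ b₁ b₂ : Fin 2 → F)

theorem smul_col2_add_smul_col2_eq_zero_iff (α β : F) :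
    α • col2 a₁ b₁ + β • col2 a₂ b₂ = 0 ↔
      col2 a₁ a₂ *ᵥ ![α, β] = 0 ∧ col2 b₁ b₂ *ᵥ ![α, β] = 0 := by
  simp [← Matrix.ext_iff, funext_iff, Fin.forall_fin_two, col2, and_and_and_comm]

theorem trace_crossMatrix_col2 :
    (crossMatrix (col2 a₁ a₂) (col2 b₁ b₂)).trace = (col2 a₁ b₁).det + (col2 a₂ b₂).det := by
  simp only [trace_fin_two, crossMatrix, det_fin_two, col2, of_apply, cons_val', cons_val_zero,
    cons_val_one, cons_val_fin_one]
  ring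

end Columns

theorem stmt7 (a₁ a₂ b₁ b₂ : Fin 2 → ℝ) :
    trank3 ![col2 a₁ a₂, col2 b₁ b₂] ≤ 2 ↔
      (∃ α β : ℝ, (α ≠ 0 ∨ β ≠ 0) ∧ α • col2 a₁ a₂ + β • col2 b₁ b₂ = 0) ∨
      (∃ α β : ℝ, (α ≠ 0 ∨ β ≠ 0) ∧ α • col2 a₁ b₁ + β • col2 a₂ b₂ = 0) ∨
      (Delta (col2 a₁ a₂) (col2 b₁ b₂) = 0 ∧ (col2 a₁ b₁).det + (col2 a₂ b₂).det = 0) ∨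
      0 < Delta (col2 a₁ a₂) (col2 b₁ b₂) := by
  simp only [trank3_le_iff, hasCPDecomp_two_iff, smul_col2_add_smul_col2_eq_zero_iff,
    trace_crossMatrix_col2]
end

section
/- Let K be a field and A, B ∈ K^{2×2}. The 2×2×2 tensor (A;B) over K is nonsingular (i.e., xA + yB is a nonsingular matrix for all (x,y) ≠ (0,0) in K²) if and only if det(A) ≠ 0 and the quadratic equation det(A)·x² − (A·B)·x + det(B) = 0 has no solution x in K, where A·B := det(A+B) − det(A) − det(B). -/
open Matrix BigOperators

/-! `det (x • A + y • B)` is the binary quadratic form `x² det A + x y (A·B) + y² det B`. Such a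
form vanishes only at the origin iff its `x²`-coefficient is nonzero (no zero at `(1, 0)`) and it has
no zero with `y ≠ 0`; rescaling to `y = -1`, these are the roots of `det A t² - (A·B) t + det B`. -/

theorem det_smul_add_smul_fin_two {R : Type*} [CommRing R] (A B : Matrix (Fin 2) (Fin 2) R)
    (x y : R) :
    (x • A + y • B).det =
      x ^ 2 * A.det + x * y * ((A + B).det - A.det - B.det) + y ^ 2 * B.det := by
  simp only [det_fin_two, Matrix.add_apply, Matrix.smul_apply, smul_eq_mul]
  ring

theorem binaryQuadratic_ne_zero_iff {K : Type*} [Field K] (a b c : K) :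
    (∀ x y : K, (x ≠ 0 ∨ y ≠ 0) → x ^ 2 * a + x * y * b + y ^ 2 * c ≠ 0) ↔
      a ≠ 0 ∧ ¬∃ t : K, a * t ^ 2 - b * t + c = 0 := by
  constructor
  · intro h
    refine ⟨by simpa using h 1 0 (Or.inl one_ne_zero), ?_⟩
    rintro ⟨t, ht⟩
    exact h t (-1) (Or.inr (neg_ne_zero.mpr one_ne_zero)) (by linear_combination ht)
  · rintro ⟨ha, hroot⟩ x y hxy hq
    rcases eq_or_ne y 0 with rfl | hy
    · have hx : x ≠ 0 := hxy.resolve_right (not_not.mpr rfl)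
      exact mul_ne_zero (pow_ne_zero 2 hx) ha (by linear_combination hq)
    · refine hroot ⟨-x / y, ?_⟩
      field_simp
      linear_combination hq

theorem stmt11 {K : Type*} [Field K] (A B : Matrix (Fin 2) (Fin 2) K) :
    (∀ x y : K, (x ≠ 0 ∨ y ≠ 0) → (x • A + y • B).det ≠ 0) ↔
      A.det ≠ 0 ∧
        ¬∃ x : K, A.det * x ^ 2 - ((A + B).det - A.det - B.det) * x + B.det = 0 := by
  simp_rw [det_smul_add_smul_fin_two]
  exact binaryQuadratic_ne_zero_iff A.det _ B.det
end

section
/- For every integer k ≥ 2, the maximal rank of real k-tensors of size 2×2×⋯×2 (k factors) is at most 2^{k−2} + 1. -/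
open BigOperators

def det2 (A : Fin 2 → Fin 2 → ℝ) : ℝ := A 0 0 * A 1 1 - A 0 1 * A 1 0
def c2m (A B : Fin 2 → Fin 2 → ℝ) : ℝ :=
  A 0 0 * B 1 1 + A 1 1 * B 0 0 - A 0 1 * B 1 0 - A 1 0 * B 0 1

lemma fin2cases (x : Fin 2) : x = 0 ∨ x = 1 := by omega

lemma myRank1 (M : Fin 2 → Fin 2 → ℝ) (h : det2 M = 0) :
    ∃ u w : Fin 2 → ℝ, ∀ a b, M a b = u a * w b := by
  unfold det2 at h
  by_cases h00 : M 0 0 ≠ 0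
  · refine ⟨![M 0 0, M 1 0], ![1, M 0 1 / M 0 0], fun a b => ?_⟩
    fin_cases a <;> fin_cases b <;> simp <;> field_simp <;> linarith
  · push_neg at h00
    by_cases h01 : M 0 1 ≠ 0
    · have h10 : M 1 0 = 0 := by
        have : M 0 1 * M 1 0 = 0 := by rw [h00] at h; linarith
        rcases mul_eq_zero.mp this with h' | h'
        · exact absurd h' h01
        · exact h'
      refine ⟨![M 0 1, M 1 1], ![0, 1], fun a b => ?_⟩
      fin_cases a <;> fin_cases b <;> simp [h00, h10]
    · push_neg at h01
      refine ⟨![0, 1], fun b => M 1 b, fun a b => ?_⟩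
      fin_cases a <;> fin_cases b <;> simp [h00, h01]

def Rk3 (S : Fin 2 → Fin 2 → Fin 2 → ℝ) : Prop :=
  ∃ x y z : Fin 2 → Fin 2 → ℝ, ∀ a b c, S a b c = ∑ s : Fin 2, x s a * y s b * z s c

lemma rk3_zeroA (A B : Fin 2 → Fin 2 → ℝ) (hA : ∀ a b, A a b = 0) :
    Rk3 (fun a b c => if c = 0 then A a b else B a b) := by
  refine ⟨fun s a => if a = s then 1 else 0, fun s b => B s b,
    fun _ c => if c = 1 then 1 else 0, fun a b c => ?_⟩
  rcases fin2cases c with rfl | rfl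
  · simp [hA]
  · rcases fin2cases a with rfl | rfl <;> simp [Fin.sum_univ_two]

lemma rk3_sing (A B : Fin 2 → Fin 2 → ℝ) (hA : det2 A = 0) (hB : det2 B = 0) :
    Rk3 (fun a b c => if c = 0 then A a b else B a b) := by
  obtain ⟨p, p', hp⟩ := myRank1 A hA
  obtain ⟨q, q', hq⟩ := myRank1 B hB
  refine ⟨fun s => if s = 0 then p else q, fun s => if s = 0 then p' else q',
    fun s c => if c = s then 1 else 0, fun a b c => ?_⟩
  rcases fin2cases c with rfl | rfl <;> simp [Fin.sum_univ_two, hp a b, hq a b]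

lemma pencil_s19 (A B : Fin 2 → Fin 2 → ℝ) (hB : det2 B ≠ 0)
    (hd : 0 < c2m A B ^ 2 - 4 * det2 A * det2 B) :
    Rk3 (fun a b c => if c = 0 then A a b else B a b) := by
  set s := Real.sqrt (c2m A B ^ 2 - 4 * det2 A * det2 B) with hsdef
  have hs : 0 < s := Real.sqrt_pos.mpr hd
  have hss : s * s = c2m A B ^ 2 - 4 * det2 A * det2 B := Real.mul_self_sqrt hd.le
  have hdiscrim : discrim (det2 B) (-(c2m A B)) (det2 A) = s * s := by
    rw [discrim]; rw [hss]; ring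
  set lam := (c2m A B + s) / (2 * det2 B) with hlamdef
  set mu := (c2m A B - s) / (2 * det2 B) with hmudef
  have hlam : det2 B * (lam * lam) + -(c2m A B) * lam + det2 A = 0 := by
    rw [quadratic_eq_zero_iff hB hdiscrim]
    left; rw [hlamdef, neg_neg]
  have hmu : det2 B * (mu * mu) + -(c2m A B) * mu + det2 A = 0 := by
    rw [quadratic_eq_zero_iff hB hdiscrim]
    right; rw [hmudef, neg_neg]
  have hne : lam ≠ mu := by
    intro h
    rw [hlamdef, hmudef, div_eq_div_iff (mul_ne_zero two_ne_zero hB) (mul_ne_zero two_ne_zero hB)] at h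
    have := mul_right_cancel₀ (mul_ne_zero two_ne_zero hB) h
    linarith
  have hdl : det2 (fun a b => A a b - lam * B a b) = 0 := by
    have : det2 (fun a b => A a b - lam * B a b)
        = det2 B * (lam * lam) + -(c2m A B) * lam + det2 A := by
      simp only [det2, c2m]; ring
    rw [this, hlam]
  have hdm : det2 (fun a b => A a b - mu * B a b) = 0 := by
    have : det2 (fun a b => A a b - mu * B a b)
        = det2 B * (mu * mu) + -(c2m A B) * mu + det2 A := by
      simp only [det2, c2m]; ring
    rw [this, hmu]
  obtain ⟨p, p', hp⟩ := myRank1 _ hdl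
  obtain ⟨q, q', hq⟩ := myRank1 _ hdm
  have hml : mu - lam ≠ 0 := sub_ne_zero.mpr (Ne.symm hne)
  refine ⟨fun i => if i = 0 then p else q, fun i => if i = 0 then p' else q',
    fun i c => if i = 0 then (if c = 0 then mu / (mu - lam) else 1 / (mu - lam))
      else (if c = 0 then -lam / (mu - lam) else -(1 / (mu - lam))), fun a b c => ?_⟩
  have hp' := hp a b
  have hq' := hq a b
  rcases fin2cases c with rfl | rfl <;>
      simp only [Fin.sum_univ_two, if_true, (by decide : ((1:Fin 2) = 0) = False), if_false] <;>
      rw [← hp', ← hq'] <;> field_simp <;> ring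

lemma avoid {ι : Type} [Finite ι] (a b c d : ι → ℝ) :
    ∃ r : ℝ, ∀ j, (a j ≠ 0 ∨ b j ≠ 0 ∨ c j ≠ 0 ∨ d j ≠ 0) →
      a j * r ^ 3 + b j * r ^ 2 + c j * r + d j ≠ 0 := by
  have hfin : ∀ j : ι, Set.Finite {x : ℝ | (a j ≠ 0 ∨ b j ≠ 0 ∨ c j ≠ 0 ∨ d j ≠ 0) ∧
      a j * x ^ 3 + b j * x ^ 2 + c j * x + d j = 0} := by
    intro j
    by_cases hj : a j ≠ 0 ∨ b j ≠ 0 ∨ c j ≠ 0 ∨ d j ≠ 0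
    · set p : Polynomial ℝ := Polynomial.C (a j) * Polynomial.X ^ 3 +
        Polynomial.C (b j) * Polynomial.X ^ 2 + Polynomial.C (c j) * Polynomial.X +
        Polynomial.C (d j) with hp
      have hpne : p ≠ 0 := by
        intro h0
        have h3 : p.coeff 3 = a j := by simp [hp, Polynomial.coeff_add, Polynomial.coeff_C]
        have h2 : p.coeff 2 = b j := by simp [hp, Polynomial.coeff_add, Polynomial.coeff_C]
        have h1 : p.coeff 1 = c j := by simp [hp, Polynomial.coeff_add, Polynomial.coeff_C]
        have hc0 : p.coeff 0 = d j := by simp [hp, Polynomial.coeff_add, Polynomial.coeff_C]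
        rw [h0] at h3 h2 h1 hc0
        simp at h3 h2 h1 hc0
        rcases hj with h | h | h | h <;> [exact h h3.symm; exact h h2.symm;
          exact h h1.symm; exact h hc0.symm]
      refine (Polynomial.finite_setOf_isRoot hpne).subset ?_
      intro x hx
      simp only [Set.mem_setOf_eq] at hx ⊢
      show p.IsRoot x
      simp [hp, Polynomial.IsRoot, Polynomial.eval_add, Polynomial.eval_mul]
      linarith [hx.2]
    · convert Set.finite_empty
      ext x; simp only [Set.mem_setOf_eq, Set.mem_empty_iff_false, iff_false]
      intro hx; exact hj hx.1
  have hU : Set.Finite (⋃ j : ι, {x : ℝ | (a j ≠ 0 ∨ b j ≠ 0 ∨ c j ≠ 0 ∨ d j ≠ 0) ∧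
      a j * x ^ 3 + b j * x ^ 2 + c j * x + d j = 0}) := Set.finite_iUnion hfin
  obtain ⟨r, hr⟩ := hU.infinite_compl.nonempty
  refine ⟨r, fun j hj hz => ?_⟩
  exact hr (Set.mem_iUnion.mpr ⟨j, ⟨hj, hz⟩⟩)

lemma quad_pos (α β γ : ℝ) : ∃ T : ℝ, ∀ t, T ≤ t → α ≠ 0 →
    0 < α ^ 2 * t ^ 2 + β * t + γ := by
  refine ⟨max 1 ((|β| + |γ| + 1) / α ^ 2), fun t ht hα => ?_⟩
  have h1 : (1:ℝ) ≤ t := le_trans (le_max_left _ _) ht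
  have hα2 : 0 < α ^ 2 := by positivity
  have h2 : (|β| + |γ| + 1) ≤ α ^ 2 * t := by
    have := (div_le_iff₀ hα2).mp (le_trans (le_max_right _ _) ht)
    linarith
  nlinarith [le_abs_self β, neg_abs_le β, le_abs_self γ, neg_abs_le γ, abs_nonneg β, abs_nonneg γ]

lemma c2m_comm (A B : Fin 2 → Fin 2 → ℝ) : c2m A B = c2m B A := by
  simp only [c2m]; ring

lemma rk3_swap (A B : Fin 2 → Fin 2 → ℝ)
    (h : Rk3 (fun a b c => if c = 0 then B a b else A a b)) :
    Rk3 (fun a b c => if c = 0 then A a b else B a b) := by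
  obtain ⟨x, y, z, hz⟩ := h
  refine ⟨x, y, fun s c => if c = 0 then z s 1 else z s 0, fun a b c => ?_⟩
  rcases fin2cases c with rfl | rfl
  · have := hz a b 1
    simp only [(by decide : ((1:Fin 2) = 0) = False), if_false, if_true] at this ⊢
    exact this
  · have := hz a b 0
    simp only [(by decide : ((1:Fin 2) = 0) = False), if_false, if_true] at this ⊢
    exact this

lemma family {ι : Type} [Finite ι] (A B : ι → Fin 2 → Fin 2 → ℝ) :
    ∃ u w : Fin 2 → ℝ, ∀ j,
      Rk3 (fun a b c => if c = 0 then A j a b else B j a b + u a * w b) := by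
  obtain ⟨r, hr⟩ := avoid (fun j => A j 0 0) (fun j => -(A j 1 0))
    (fun j => -(A j 0 1)) (fun j => A j 1 1)
  set α : ι → ℝ := fun j => A j 0 0 * r ^ 3 + -(A j 1 0) * r ^ 2 + -(A j 0 1) * r + A j 1 1
    with hαdef
  set β : ι → ℝ := fun j => B j 0 0 * r ^ 3 + -(B j 1 0) * r ^ 2 + -(B j 0 1) * r + B j 1 1
    with hβdef
  set bb : ι → ℝ := fun j => 2 * c2m (A j) (B j) * α j - 4 * det2 (A j) * β j with hbbdef
  set dd : ι → ℝ := fun j => c2m (A j) (B j) ^ 2 - 4 * det2 (A j) * det2 (B j) with hdddef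
  have hex : ∀ j : ι, ∃ T : ℝ, ∀ t, T ≤ t → α j ≠ 0 →
      0 < α j ^ 2 * t ^ 2 + bb j * t + dd j := fun j => quad_pos (α j) (bb j) (dd j)
  choose Tf hTf using hex
  obtain ⟨t, ht⟩ := (Set.finite_range Tf).bddAbove
  have htj : ∀ j, Tf j ≤ t := fun j => ht (Set.mem_range_self j)
  refine ⟨fun a => if a = 0 then t else t * r, fun b => if b = 0 then 1 else r ^ 2, fun j => ?_⟩
  set u : Fin 2 → ℝ := fun a => if a = 0 then t else t * r with hu
  set w : Fin 2 → ℝ := fun b => if b = 0 then 1 else r ^ 2 with hw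
  set B' : Fin 2 → Fin 2 → ℝ := fun a b => B j a b + u a * w b with hB'
  show Rk3 (fun a b c => if c = 0 then A j a b else B' a b)
  by_cases hA0 : A j 0 0 = 0 ∧ A j 0 1 = 0 ∧ A j 1 0 = 0 ∧ A j 1 1 = 0
  · exact rk3_zeroA _ _ (fun a b => by fin_cases a <;> fin_cases b <;> tauto)
  · have hαj : α j ≠ 0 := by
      apply hr
      simp only [neg_ne_zero]
      tauto
    have hkey : c2m (A j) B' ^ 2 - 4 * det2 (A j) * det2 B'
        = α j ^ 2 * t ^ 2 + bb j * t + dd j := by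
      simp only [hbbdef, hdddef, hαdef, hβdef, c2m, det2, hB', hu, hw,
        (by decide : ((1:Fin 2) = 0) = False), if_false, if_true]
      ring
    have hdisc : 0 < c2m (A j) B' ^ 2 - 4 * det2 (A j) * det2 B' := by
      rw [hkey]; exact hTf j t (htj j) hαj
    by_cases hdB : det2 B' = 0
    · by_cases hdA : det2 (A j) = 0
      · exact rk3_sing _ _ hdA hdB
      · refine rk3_swap _ _ (pencil_s19 B' (A j) hdA ?_)
        rw [c2m_comm]
        nlinarith [hdisc]
    · exact pencil_s19 _ _ hdB hdisc

def Rk {k : ℕ} (n : ℕ) (T : (Fin k → Fin 2) → ℝ) : Prop :=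
  ∃ v : Fin n → Fin k → Fin 2 → ℝ, ∀ idx, T idx = ∑ s, ∏ t, v s t (idx t)

lemma rk_congr {k n : ℕ} {T T' : (Fin k → Fin 2) → ℝ} (h : ∀ idx, T idx = T' idx)
    (h' : Rk n T') : Rk n T := by
  obtain ⟨v, hv⟩ := h'
  exact ⟨v, fun idx => (h idx).trans (hv idx)⟩

lemma rk_add {k a b : ℕ} {T S : (Fin k → Fin 2) → ℝ} (hT : Rk a T) (hS : Rk b S) :
    Rk (a + b) (fun idx => T idx + S idx) := by
  obtain ⟨v1, hv1⟩ := hT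
  obtain ⟨v2, hv2⟩ := hS
  refine ⟨Fin.addCases v1 v2, fun idx => ?_⟩
  rw [Fin.sum_univ_add]
  simp only [Fin.addCases_left, Fin.addCases_right]
  rw [hv1 idx, hv2 idx]

lemma rk_sum {k n : ℕ} {ι : Type} [DecidableEq ι] (s : Finset ι)
    (f : ι → (Fin k → Fin 2) → ℝ) (h : ∀ j ∈ s, Rk n (f j)) :
    Rk (s.card * n) (fun idx => ∑ j ∈ s, f j idx) := by
  induction s using Finset.induction_on with
  | empty =>
    simp only [Finset.card_empty, Nat.zero_mul]
    exact ⟨Fin.elim0, fun idx => by simp⟩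
  | @insert j s' hj ih =>
    have h1 := h j (Finset.mem_insert_self j s')
    have h2 := ih (fun i hi => h i (Finset.mem_insert_of_mem hi))
    rw [Finset.card_insert_of_notMem hj]
    refine rk_congr (fun idx => ?_) (by
      have : (s'.card + 1) * n = n + s'.card * n := by ring
      rw [this]
      exact rk_add h1 h2)
    rw [Finset.sum_insert hj]

lemma prod3 {m : ℕ} (g : Fin (m + 3) → ℝ) :
    ∏ t, g t = g ⟨0, by omega⟩ * g ⟨1, by omega⟩ * g ⟨2, by omega⟩ *
      ∏ i : Fin m, g ⟨i.1 + 3, by omega⟩ := by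
  rw [Fin.prod_univ_succ, Fin.prod_univ_succ, Fin.prod_univ_succ]
  have e0 : (0 : Fin (m + 3)) = ⟨0, by omega⟩ := by ext; simp
  have e1 : ((0 : Fin (m + 2)).succ : Fin (m + 3)) = ⟨1, by omega⟩ := by ext; simp
  have e2 : (((0 : Fin (m + 1)).succ).succ : Fin (m + 3)) = ⟨2, by omega⟩ := by ext; simp
  have e3 : ∀ i : Fin m, ((i.succ.succ.succ : Fin (m + 3))) = ⟨i.1 + 3, by omega⟩ := by
    intro i; ext; simp [Fin.val_succ]
  rw [e0, e1, e2]
  rw [Finset.prod_congr rfl (fun i _ => by rw [e3 i])]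
  ring

lemma prod_split {m : ℕ} (x y z : Fin 2 → ℝ) (g : Fin m → Fin 2 → ℝ)
    (idx : Fin (m + 3) → Fin 2) :
    (∏ t : Fin (m + 3), (if h : 3 ≤ t.1 then g ⟨t.1 - 3, by omega⟩ (idx t)
      else if t.1 = 0 then x (idx t) else if t.1 = 1 then y (idx t) else z (idx t)))
    = x (idx ⟨0, by omega⟩) * y (idx ⟨1, by omega⟩) * z (idx ⟨2, by omega⟩) *
      ∏ i : Fin m, g i (idx ⟨i.1 + 3, by omega⟩) := by
  rw [prod3]
  norm_num

lemma main3 (m : ℕ) (T : (Fin (m + 3) → Fin 2) → ℝ) : Rk (2 ^ (m + 1) + 1) T := by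
  classical
  set glue : Fin 2 → Fin 2 → Fin 2 → (Fin m → Fin 2) → (Fin (m + 3) → Fin 2) :=
    fun a b c j t => if h : 3 ≤ t.1 then j ⟨t.1 - 3, by omega⟩
      else if t.1 = 0 then a else if t.1 = 1 then b else c with hgluedef
  set tail : (Fin (m + 3) → Fin 2) → (Fin m → Fin 2) :=
    fun idx i => idx ⟨i.1 + 3, by omega⟩ with htaildef
  have hglue : ∀ idx : Fin (m + 3) → Fin 2,
      glue (idx ⟨0, by omega⟩) (idx ⟨1, by omega⟩) (idx ⟨2, by omega⟩) (tail idx) = idx := by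
    intro idx; funext t
    simp only [hgluedef]
    split_ifs with h1 h2 h3
    · simp only [htaildef]
      congr 1; ext; simp; omega
    · congr 1; exact (Fin.ext h2).symm
    · congr 1; exact (Fin.ext h3).symm
    · congr 1; ext; simp; omega
  obtain ⟨u, w, hfam⟩ := family (ι := Fin m → Fin 2)
    (fun j a b => T (glue a b 0 j)) (fun j a b => T (glue a b 1 j))
  set Δ : (Fin (m + 3) → Fin 2) → ℝ :=
    fun idx => (if idx ⟨2, by omega⟩ = 1 then (1 : ℝ) else 0) *
      (u (idx ⟨0, by omega⟩) * w (idx ⟨1, by omega⟩)) with hΔdef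
  -- Rank one for -Δ
  have h1 : Rk 1 (fun idx => -(Δ idx)) := by
    refine ⟨fun _ t q => if h : 3 ≤ t.1 then (fun (_ : Fin m) (_ : Fin 2) => (1:ℝ)) ⟨t.1 - 3, by omega⟩ q
      else if t.1 = 0 then (fun q' => -(u q')) q else if t.1 = 1 then w q
      else (fun q' => if q' = 1 then (1:ℝ) else 0) q, fun idx => ?_⟩
    rw [Fin.sum_univ_one]
    rw [prod_split (fun q' => -(u q')) w (fun q' => if q' = 1 then (1:ℝ) else 0)
      (fun _ _ => (1:ℝ)) idx]
    rw [Finset.prod_const_one]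
    simp only [hΔdef]
    rcases fin2cases (idx ⟨2, by omega⟩) with h | h <;> rw [h] <;> norm_num <;> ring
  -- the slice tensors
  set G : (Fin m → Fin 2) → (Fin (m + 3) → Fin 2) → ℝ := fun j idx =>
    (∏ i : Fin m, (if idx ⟨i.1 + 3, by omega⟩ = j i then (1 : ℝ) else 0)) *
      (if idx ⟨2, by omega⟩ = 0 then T (glue (idx ⟨0, by omega⟩) (idx ⟨1, by omega⟩) 0 j)
        else T (glue (idx ⟨0, by omega⟩) (idx ⟨1, by omega⟩) 1 j) +
          u (idx ⟨0, by omega⟩) * w (idx ⟨1, by omega⟩)) with hGdef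
  have h2 : ∀ j, Rk 2 (G j) := by
    intro j
    obtain ⟨x, y, z, hxyz⟩ := hfam j
    refine ⟨fun s t q => if h : 3 ≤ t.1 then
        (fun (i : Fin m) (q' : Fin 2) => if q' = j i then (1:ℝ) else 0) ⟨t.1 - 3, by omega⟩ q
      else if t.1 = 0 then x s q else if t.1 = 1 then y s q else z s q,
      fun idx => ?_⟩
    rw [Fin.sum_univ_two]
    rw [prod_split (x 0) (y 0) (z 0) (fun i q' => if q' = j i then (1:ℝ) else 0) idx,
      prod_split (x 1) (y 1) (z 1) (fun i q' => if q' = j i then (1:ℝ) else 0) idx]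
    have hx := hxyz (idx ⟨0, by omega⟩) (idx ⟨1, by omega⟩) (idx ⟨2, by omega⟩)
    rw [Fin.sum_univ_two] at hx
    simp only [hGdef]
    rcases fin2cases (idx ⟨2, by omega⟩) with h | h <;> rw [h] at hx ⊢ <;>
      simp only [if_pos rfl, (by decide : (((1 : Fin 2) = 0)) = False), if_false] at hx ⊢ <;>
      rw [hx] <;> ring
  -- gluing identity
  have h3 : ∀ idx, T idx = -(Δ idx) + ∑ j : Fin m → Fin 2, G j idx := by
    intro idx
    have hδ : ∀ j : Fin m → Fin 2,
        (∏ i : Fin m, (if idx ⟨i.1 + 3, by omega⟩ = j i then (1 : ℝ) else 0))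
          = if j = tail idx then 1 else 0 := by
      intro j
      by_cases hj : j = tail idx
      · subst hj
        rw [if_pos rfl]
        refine Finset.prod_eq_one (fun i _ => ?_)
        rw [if_pos rfl]
      · rw [if_neg hj]
        obtain ⟨i, hi⟩ := Function.ne_iff.mp hj
        refine Finset.prod_eq_zero (Finset.mem_univ i) ?_
        exact if_neg (fun hh : idx ⟨i.1 + 3, by omega⟩ = j i => hi hh.symm)
    have hterm : ∀ j : Fin m → Fin 2, G j idx = if j = tail idx then
        (if idx ⟨2, by omega⟩ = 0 then T (glue (idx ⟨0, by omega⟩) (idx ⟨1, by omega⟩) 0 j)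
          else T (glue (idx ⟨0, by omega⟩) (idx ⟨1, by omega⟩) 1 j) +
            u (idx ⟨0, by omega⟩) * w (idx ⟨1, by omega⟩)) else 0 := by
      intro j
      rw [hGdef]
      simp only []
      rw [hδ j]
      by_cases hj : j = tail idx
      · rw [if_pos hj, if_pos hj, one_mul]
      · rw [if_neg hj, if_neg hj, zero_mul]
    have hsum : ∑ j : Fin m → Fin 2, G j idx
        = (if idx ⟨2, by omega⟩ = 0 then
            T (glue (idx ⟨0, by omega⟩) (idx ⟨1, by omega⟩) 0 (tail idx))
          else T (glue (idx ⟨0, by omega⟩) (idx ⟨1, by omega⟩) 1 (tail idx)) +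
            u (idx ⟨0, by omega⟩) * w (idx ⟨1, by omega⟩)) := by
      rw [Finset.sum_congr rfl (fun j _ => hterm j),
        Finset.sum_ite_eq' Finset.univ (tail idx), if_pos (Finset.mem_univ _)]
    rw [hsum]
    have hg := hglue idx
    rcases fin2cases (idx ⟨2, by omega⟩) with h | h <;> rw [h] at hg ⊢
    · rw [if_pos rfl, hg]
      simp only [hΔdef, h]
      norm_num
      try ring
    · rw [if_neg (by decide : ¬((1 : Fin 2) = 0)), hg]
      simp only [hΔdef, h]
      norm_num
      try ring
  -- combine
  have hs := rk_sum Finset.univ G (fun j _ => h2 j)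
  have hcard : (Finset.univ : Finset (Fin m → Fin 2)).card = 2 ^ m := by
    simp [Fintype.card_fun]
  rw [hcard] at hs
  have hfinal := rk_add h1 hs
  rw [show 2 ^ (m + 1) + 1 = 1 + 2 ^ m * 2 from by rw [pow_succ]; ring]
  exact rk_congr h3 hfinal

lemma main2 (T : (Fin 2 → Fin 2) → ℝ) : Rk 2 T := by
  have key : ∀ idx : Fin 2 → Fin 2,
      (fun t' : Fin 2 => if (t' : ℕ) = 0 then idx 0 else idx 1) = idx := by
    intro idx; funext t'
    rcases fin2cases t' with rfl | rfl <;> norm_num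
  refine ⟨fun s t q => if (t : ℕ) = 0 then (if q = s then (1 : ℝ) else 0)
    else T (fun t' => if (t' : ℕ) = 0 then s else q), fun idx => ?_⟩
  rw [Fin.sum_univ_two, Fin.prod_univ_two, Fin.prod_univ_two]
  norm_num
  rcases fin2cases (idx 0) with h | h <;> rw [h] <;> norm_num <;>
    exact congrArg T (Eq.symm (by
      funext t'
      rcases fin2cases t' with rfl | rfl <;> norm_num <;> omega))

/-- Rank of a k-tensor of size 2×⋯×2 over ℝ. -/
noncomputable def trankK {k : ℕ} (T : (Fin k → Fin 2) → ℝ) : ℕ :=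
  sInf {r | ∃ v : Fin r → Fin k → Fin 2 → ℝ, ∀ idx, T idx = ∑ s, ∏ t, v s t (idx t)}

theorem stmt19 (k : ℕ) (hk : 2 ≤ k) (T : (Fin k → Fin 2) → ℝ) :
    trankK T ≤ 2 ^ (k - 2) + 1 := by
  have hmem : Rk (2 ^ (k - 2) + 1) T → trankK T ≤ 2 ^ (k - 2) + 1 := by
    rintro ⟨v, hv⟩
    exact Nat.sInf_le ⟨v, hv⟩
  apply hmem
  rcases Nat.lt_or_ge k 3 with h | h
  · have hk2 : k = 2 := by omega
    subst hk2
    rw [show 2 ^ (2 - 2) + 1 = 2 from by norm_num]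
    exact main2 T
  · obtain ⟨m, rfl⟩ : ∃ m, k = m + 3 := ⟨k - 3, by omega⟩
    rw [show m + 3 - 2 = m + 1 from by omega]
    exact main3 m T
end
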